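/- Let $u \in C^2(\mathbb{T}^2)$ satisfy $u_{yy}(x,y) + B_{22}\, u_y(x,y) \ge -C_{22}$ for all $(x,y)$, where $B_{22}, C_{22}$ are real constants. Then $|u_y(x,y)| \le 2\, C_{22}\, e^{2|B_{22}|}$ for all $(x,y)$, provided $C_{22} \ge 0$. -/

import Mathlib

open Real

/-- Partial derivative in the first variable. -/
noncomputable def pX (u : ℝ → ℝ → ℝ) : ℝ → ℝ → ℝ := fun x y => deriv (fun s => u s y) x

/-- Partial derivative in the second variable. -/
noncomputable def pY (u : ℝ → ℝ → ℝ) : ℝ → ℝ → ℝ := fun x y => deriv (fun s => u x s) y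

/-- `u` is 1-periodic in both variables, i.e. defines a function on the torus `𝕋²`. -/
def Per2 (u : ℝ → ℝ → ℝ) : Prop := ∀ x y : ℝ, u (x + 1) y = u x y ∧ u x (y + 1) = u x y

/-
Along each vertical line, `v = u_y(x, ·)` is periodic with a zero `t₀` (Rolle). The
inequality says `(e^{αt} v)' ≥ -C e^{αt}` with `α = B₂₂`, so by the mean value inequality
`e^{αt} v` cannot drop by more than `C e^{αt + |α|}` over an interval of length at most one
around `t`. Comparing with its value `0` at `t₀` bounds `v` from below on `[t₀, t₀ + 1]` and
from above on `[t₀ - 1, t₀]`, and periodicity spreads both bounds to all of `ℝ`.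
-/

namespace Function.Periodic

variable {f : ℝ → ℝ} {c : ℝ}

theorem exists_deriv_eq_zero (hf : Periodic f c) (hc : 0 < c) (hd : Differentiable ℝ f) :
    ∃ t, deriv f t = 0 := by
  obtain ⟨t, -, ht⟩ :=
    _root_.exists_deriv_eq_zero hc hd.continuous.continuousOn (by simpa using (hf 0).symm)
  exact ⟨t, ht⟩

theorem deriv (hf : Periodic f c) : Periodic (deriv f) c := fun x => by
  rw [← deriv_comp_add_const, show (fun s => f (s + c)) = f from funext hf]

end Function.Periodic

section WeightedDerivative

variable {v : ℝ → ℝ} {α C p : ℝ}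

theorem hasDerivAt_exp_mul_mul (hv : Differentiable ℝ v) (t : ℝ) :
    HasDerivAt (fun s => exp (α * s) * v s) (exp (α * t) * (deriv v t + α * v t)) t := by
  have hexp : HasDerivAt (fun s => exp (α * s)) (exp (α * t) * α) t :=
    ((hasDerivAt_id t).const_mul α).exp.congr_deriv (by simp)
  exact (hexp.mul (hv t).hasDerivAt).congr_deriv (by ring)

theorem exp_mul_mul_sub_ge_of_deriv_add_mul_ge (hv : Differentiable ℝ v) (hC : 0 ≤ C)
    (h : ∀ s, -C ≤ deriv v s + α * v s) {a b t : ℝ} (hab : a ≤ b) (hba : b - a ≤ p)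
    (ht : t ∈ Set.Icc a b) :
    -(C * exp (α * t + |α| * p)) * (b - a) ≤ exp (α * b) * v b - exp (α * a) * v a := by
  have hφ := hasDerivAt_exp_mul_mul (α := α) hv
  refine (convex_Icc a b).mul_sub_le_image_sub_of_le_deriv
    (fun s _ => (hφ s).continuousAt.continuousWithinAt)
    (fun s _ => (hφ s).differentiableAt.differentiableWithinAt) (fun s hs => ?_)
    a (Set.left_mem_Icc.2 hab) b (Set.right_mem_Icc.2 hab) hab
  obtain ⟨has, hsb⟩ := interior_subset (s := Set.Icc a b) hs
  have hdist : α * s ≤ α * t + |α| * p := by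
    have : |s - t| ≤ p := abs_sub_le_iff.2 ⟨by linarith [ht.1], by linarith [ht.2]⟩
    nlinarith [le_abs_self (α * (s - t)), abs_mul α (s - t), abs_nonneg α]
  rw [(hφ s).deriv]
  calc -(C * exp (α * t + |α| * p)) ≤ -(C * exp (α * s)) := by gcongr
    _ = exp (α * s) * -C := by ring
    _ ≤ exp (α * s) * (deriv v s + α * v s) := by gcongr; exact h s

theorem abs_le_of_periodic_of_deriv_add_mul_ge (hv : Differentiable ℝ v)
    (hper : Function.Periodic v p) (hp : 0 < p) {t₀ : ℝ} (ht₀ : v t₀ = 0) (hC : 0 ≤ C)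
    (h : ∀ s, -C ≤ deriv v s + α * v s) (y : ℝ) :
    |v y| ≤ C * p * exp (|α| * p) := by
  have hK : ∀ t, C * exp (α * t + |α| * p) = exp (α * t) * (C * exp (|α| * p)) := fun t => by
    rw [exp_add]; ring
  rw [abs_le]
  constructor
  · obtain ⟨t, ⟨ht₁, ht₂⟩, hyt⟩ := hper.exists_mem_Ico hp y t₀
    have hinc := exp_mul_mul_sub_ge_of_deriv_add_mul_ge (p := p) hv hC h ht₁ (by linarith)
      ⟨ht₁, le_rfl⟩
    rw [ht₀, mul_zero, sub_zero, hK] at hinc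
    have : -(C * exp (|α| * p)) * (t - t₀) ≤ v t :=
      le_of_mul_le_mul_left (by linarith) (exp_pos (α * t))
    rw [hyt]
    nlinarith [mul_nonneg (mul_nonneg hC (exp_pos (|α| * p)).le) (sub_nonneg.2 ht₂.le)]
  · obtain ⟨t, ⟨ht₁, ht₂⟩, hyt⟩ := hper.exists_mem_Ioc hp y (t₀ - p)
    have ht : t ≤ t₀ := by linarith
    have hinc := exp_mul_mul_sub_ge_of_deriv_add_mul_ge (p := p) hv hC h ht (by linarith)
      ⟨le_rfl, ht⟩
    rw [ht₀, mul_zero, zero_sub, hK] at hinc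
    have : -(C * exp (|α| * p)) * (t₀ - t) ≤ -v t :=
      le_of_mul_le_mul_left (by linarith) (exp_pos (α * t))
    rw [hyt]
    nlinarith [mul_nonneg (mul_nonneg hC (exp_pos (|α| * p)).le) (sub_nonneg.2 ht₁.le)]

theorem abs_deriv_le_of_periodic_of_deriv_deriv_add_mul_ge {w : ℝ → ℝ}
    (hw : Differentiable ℝ w) (hw' : Differentiable ℝ (deriv w)) (hper : Function.Periodic w p)
    (hp : 0 < p) (hC : 0 ≤ C)
    (h : ∀ s, -C ≤ deriv (deriv w) s + α * deriv w s) (y : ℝ) :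
    |deriv w y| ≤ C * p * exp (|α| * p) :=
  have ⟨_, ht₀⟩ := hper.exists_deriv_eq_zero hp hw
  abs_le_of_periodic_of_deriv_add_mul_ge hw' hper.deriv hp ht₀ hC h y

end WeightedDerivative

/-- The gradient estimate in the `y`-variable: if `u_{yy} + B₂₂ u_y ≥ -C₂₂` with
`C₂₂ ≥ 0`, then `|u_y| ≤ 2 C₂₂ e^{2|B₂₂|}`. -/
theorem stmt3 (u : ℝ → ℝ → ℝ)
    (hu : ContDiff ℝ 2 (fun p : ℝ × ℝ => u p.1 p.2)) (huper : Per2 u)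
    (B₂₂ C₂₂ : ℝ) (hC : C₂₂ ≥ 0)
    (h : ∀ x y : ℝ, pY (pY u) x y + B₂₂ * pY u x y ≥ -C₂₂) :
    ∀ x y : ℝ, |pY u x y| ≤ 2 * C₂₂ * Real.exp (2 * |B₂₂|) := by
  intro x y
  have hux : ContDiff ℝ 2 (u x) := hu.comp (contDiff_const.prodMk contDiff_id)
  have hbound : |pY u x y| ≤ C₂₂ * 1 * exp (|B₂₂| * 1) :=
    abs_deriv_le_of_periodic_of_deriv_deriv_add_mul_ge (hux.differentiable two_ne_zero)
      hux.differentiable_deriv_two (fun t => (huper x t).2) one_pos hC (h x) y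
  have hexp : exp (|B₂₂| * 1) ≤ exp (2 * |B₂₂|) := exp_le_exp.2 (by linarith [abs_nonneg B₂₂])
  nlinarith [exp_pos (|B₂₂| * 1)]
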